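/- Let G be a directed graph on vertices {1,...,N} with adjacency matrix A. For every vertex i and k ≥ 1, the number of simple cycles of length k through i (as closed walks starting at i) equals ∑_{C} C(|N(C)|, k−|C|)·(−1)^{k−|C|}·((A_C)^k)_{ii}, the sum being over non-empty weakly connected subsets C of V. -/

import Mathlib

open scoped Classical

/-- Binomial coefficient with integer arguments, zero outside `0 ≤ k ≤ n`. -/
def Ibinom (n k : ℤ) : ℤ := if 0 ≤ k ∧ k ≤ n then (n.toNat).choose k.toNat else 0

/-- Restriction of a matrix to a subset of indices (zero outside `S × S`). -/
def restrict {N : ℕ} (M : Matrix (Fin N) (Fin N) ℤ) (S : Finset (Fin N)) :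
    Matrix (Fin N) (Fin N) ℤ :=
  fun i j => if i ∈ S ∧ j ∈ S then M i j else 0

/-- The subgraph induced by `C` is weakly connected. -/
def WConn {N : ℕ} (E : Fin N → Fin N → Prop) (C : Finset (Fin N)) : Prop :=
  ∀ i ∈ C, ∀ j ∈ C,
    Relation.ReflTransGen (fun a b => a ∈ C ∧ b ∈ C ∧ (E a b ∨ E b a)) i j

/-- The weak neighborhood of `C`: vertices outside `C` with an edge to or from `C`. -/
noncomputable def wNbhd {N : ℕ} (E : Fin N → Fin N → Prop) (C : Finset (Fin N)) :
    Finset (Fin N) :=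
  Finset.univ.filter (fun i => i ∉ C ∧ ∃ j ∈ C, E i j ∨ E j i)

/-!
A closed walk of length `k` at `i` is a simple cycle iff it visits exactly `k` vertices, and
`((A_C)^k)_{ii}` counts the closed walks at `i` whose vertex set lies in `C`. Exchanging the
sums, it remains to show that for every nonempty weakly connected `S` the coefficients
`(-1)^{k-|C|} C(|N(C)|, k-|C|)` of the weakly connected `C ⊇ S` add up to `[|S| = k]`.
This coefficient is the coefficient of `x^k` in `x^{|C|} (1-x)^{|N(C)|}`, and
`∑_{C ⊇ S} p^{|C|} q^{|N(C)|} = p^{|S|}` whenever `p + q = 1`: in site percolation with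
parameter `p`, the term of `C` is the probability that the open cluster of a fixed `s ∈ S` is
exactly `C`, so the sum is the probability `p^{|S|}` that all of `S` is open.
-/

section

open Finset Polynomial

theorem Matrix.pow_apply_eq_sum_prod {n R : Type*} [Fintype n] [DecidableEq n] [CommSemiring R]
    (M : Matrix n n R) (k : ℕ) (i j : n) :
    (M ^ k) i j = ∑ w : Fin (k + 1) → n with w 0 = i ∧ w (Fin.last k) = j,
      ∏ m : Fin k, M (w m.castSucc) (w m.succ) := by
  induction k generalizing i with
  | zero =>
    rw [pow_zero, Matrix.one_apply, sum_filter,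
      ← (Equiv.funUnique (Fin 1) n).symm.sum_comp]
    simp [Fin.last, ite_and]
  | succ k ih =>
    rw [pow_succ', Matrix.mul_apply, sum_filter,
      ← (Fin.consEquiv fun _ => n).sum_comp, Fintype.sum_prod_type]
    simp only [ih, sum_filter, mul_sum, mul_ite, mul_zero, ite_and]
    rw [sum_comm]
    simp [Fin.prod_univ_succ, Fin.consEquiv, ← Fin.succ_last]

theorem Matrix.pow_apply_eq_card_of_eq_ite {n R : Type*} [Fintype n] [DecidableEq n]
    [CommSemiring R] {M : Matrix n n R} {r : n → n → Prop}
    (hM : ∀ a b, M a b = if r a b then 1 else 0) (k : ℕ) (i j : n) :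
    (M ^ k) i j = #{w : Fin (k + 1) → n |
      w 0 = i ∧ w (Fin.last k) = j ∧ ∀ m : Fin k, r (w m.castSucc) (w m.succ)} := by
  simp only [Matrix.pow_apply_eq_sum_prod, hM, Fintype.prod_boole, natCast_card_filter,
    sum_filter, ite_and]
  congr!

lemma Fin.forall_castSucc_and_forall_succ_iff {k : ℕ} (hk : 1 ≤ k) {P : Fin (k + 1) → Prop} :
    ((∀ m : Fin k, P m.castSucc) ∧ ∀ m : Fin k, P m.succ) ↔ ∀ m, P m := by
  refine ⟨fun ⟨hcast, hsucc⟩ m => ?_, fun h => ⟨fun _ => h _, fun _ => h _⟩⟩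
  cases m using Fin.lastCases with
  | last =>
    obtain ⟨k, rfl⟩ := Nat.exists_eq_add_of_le' hk
    exact Fin.succ_last k ▸ hsucc (Fin.last k)
  | cast m => exact hcast m

lemma injective_castSucc_iff_card_image {α : Type*} [DecidableEq α] {k : ℕ} (hk : 1 ≤ k)
    {w : Fin (k + 1) → α} (hw : w (Fin.last k) = w 0) :
    Function.Injective (fun m : Fin k => w m.castSucc) ↔ #(univ.image w) = k := by
  have himage : univ.image w = univ.image (fun m : Fin k => w m.castSucc) := by
    ext x
    simp only [mem_image, mem_univ, true_and]
    refine ⟨fun ⟨m, hm⟩ => ?_, fun ⟨m, hm⟩ => ⟨_, hm⟩⟩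
    cases m using Fin.lastCases with
    | last => exact ⟨⟨0, hk⟩, hw ▸ hm⟩
    | cast m => exact ⟨m, hm⟩
  rw [himage, ← Set.injOn_univ, ← coe_univ, ← card_image_iff, card_univ, Fintype.card_fin]

theorem sum_pow_card_mul_pow_card_compl_of_inter_eq {α R : Type*} [Fintype α] [DecidableEq α]
    [CommSemiring R] {p q : R} (hpq : p + q = 1) {I T : Finset α} (hIT : I ⊆ T) :
    ∑ H : Finset α with H ∩ T = I, p ^ #H * q ^ #Hᶜ = p ^ #I * q ^ #(T \ I) := by
  have hTR {R : Finset α} (hR : R ∈ Tᶜ.powerset) : Disjoint T R :=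
    subset_compl_iff_disjoint_left.mp (mem_powerset.mp hR)
  have hcard {R : Finset α} (hR : R ∈ Tᶜ.powerset) :
      #(I ∪ R) = #I + #R ∧ #(I ∪ R)ᶜ = #(T \ I) + (#Tᶜ - #R) := by
    have h1 := card_union_of_disjoint (disjoint_of_subset_left hIT (hTR hR))
    have h2 := card_le_univ (T ∪ R)
    rw [card_union_of_disjoint (hTR hR)] at h2
    rw [card_compl, card_compl, h1, card_sdiff_of_subset hIT]
    have := card_le_card hIT
    omega
  have hinv {H : Finset α} (hH : H ∈ ({H | H ∩ T = I} : Finset (Finset α))) :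
      I ∪ H \ T = H := by
    rw [← (mem_filter.mp hH).2, union_comm, sdiff_union_inter]
  calc ∑ H : Finset α with H ∩ T = I, p ^ #H * q ^ #Hᶜ
      = ∑ R ∈ Tᶜ.powerset, p ^ #(I ∪ R) * q ^ #(I ∪ R)ᶜ := by
        refine sum_nbij' (· \ T) (I ∪ ·) (fun H _ => by simp) (fun R hR => ?_)
          (fun H hH => hinv hH) (fun R hR => ?_) (fun H hH => by rw [hinv hH])
        · refine mem_coe.mpr (mem_filter.mpr ⟨mem_univ _, ?_⟩)
          rw [union_inter_distrib_right, inter_eq_left.mpr hIT,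
            disjoint_iff_inter_eq_empty.mp (hTR hR).symm, union_empty]
        · rw [union_sdiff_distrib, sdiff_eq_empty_iff_subset.mpr hIT, empty_union,
            (hTR hR).symm.sdiff_eq_left]
    _ = p ^ #I * q ^ #(T \ I) * ∑ R ∈ Tᶜ.powerset, p ^ #R * q ^ (#Tᶜ - #R) := by
        rw [mul_sum]
        refine sum_congr rfl fun R hR => ?_
        rw [(hcard hR).1, (hcard hR).2, pow_add, pow_add]
        ring
    _ = p ^ #I * q ^ #(T \ I) := by rw [sum_pow_mul_eq_add_pow, hpq, one_pow, mul_one]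

section WeakComponent

variable {N : ℕ} {E : Fin N → Fin N → Prop} {H C : Finset (Fin N)} {s : Fin N}

/-- `WConn E C` unfolds to reachability for `WAdjIn E C` between any two points of `C`. -/
def WAdjIn (E : Fin N → Fin N → Prop) (H : Finset (Fin N)) (a b : Fin N) : Prop :=
  a ∈ H ∧ b ∈ H ∧ (E a b ∨ E b a)

instance : Std.Symm (WAdjIn E H) where
  symm _ _ h := ⟨h.2.1, h.1, h.2.2.symm⟩

lemma WAdjIn.mono {H' : Finset (Fin N)} (hHH' : H ⊆ H') {a b : Fin N} (h : WAdjIn E H a b) :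
    WAdjIn E H' a b :=
  ⟨hHH' h.1, hHH' h.2.1, h.2.2⟩

noncomputable def wComponent (E : Fin N → Fin N → Prop) (H : Finset (Fin N)) (s : Fin N) :
    Finset (Fin N) :=
  {x ∈ H | Relation.ReflTransGen (WAdjIn E H) s x}

lemma mem_wComponent {x : Fin N} :
    x ∈ wComponent E H s ↔ x ∈ H ∧ Relation.ReflTransGen (WAdjIn E H) s x := by
  simp [wComponent]

lemma wComponent_subset : wComponent E H s ⊆ H := filter_subset _ _

lemma reflTransGen_wAdjIn_wComponent {x : Fin N}
    (h : Relation.ReflTransGen (WAdjIn E H) s x) :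
    Relation.ReflTransGen (WAdjIn E (wComponent E H s)) s x := by
  induction h with
  | refl => rfl
  | @tail b c hsb hbc ih =>
    exact ih.tail ⟨mem_wComponent.mpr ⟨hbc.1, hsb⟩,
      mem_wComponent.mpr ⟨hbc.2.1, hsb.tail hbc⟩, hbc.2.2⟩

lemma wConn_wComponent : WConn E (wComponent E H s) := fun _ hx _ hy =>
  (symm (reflTransGen_wAdjIn_wComponent (mem_wComponent.mp hx).2)).trans
    (reflTransGen_wAdjIn_wComponent (mem_wComponent.mp hy).2)

lemma subset_wComponent (hC : WConn E C) (hs : s ∈ C) (hCH : C ⊆ H) : C ⊆ wComponent E H s :=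
  fun x hx => mem_wComponent.mpr ⟨hCH hx,
    Relation.ReflTransGen.mono (fun _ _ => WAdjIn.mono hCH) _ _ (hC s hs x hx)⟩

lemma disjoint_wNbhd : Disjoint C (wNbhd E C) :=
  disjoint_left.mpr fun _ hx hxN => (mem_filter.mp hxN).2.1 hx

lemma wComponent_eq_iff (hC : WConn E C) (hs : s ∈ C) :
    wComponent E H s = C ↔ H ∩ (C ∪ wNbhd E C) = C := by
  constructor
  · rintro rfl
    refine subset_antisymm (fun x hx => ?_) (subset_inter wComponent_subset subset_union_left)
    obtain ⟨hxH, hxC | hxN⟩ := mem_inter.mp hx |>.imp_right mem_union.mp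
    · exact hxC
    · obtain ⟨hxC, y, hy, hxy⟩ := (mem_filter.mp hxN).2
      exact absurd (mem_wComponent.mpr ⟨hxH, (mem_wComponent.mp hy).2.tail
        ⟨wComponent_subset hy, hxH, hxy.symm⟩⟩) hxC
  · intro hHC
    have hCH : C ⊆ H := fun x hx => (mem_inter.mp (hHC.symm ▸ hx)).1
    refine subset_antisymm (fun x hx => ?_) (subset_wComponent hC hs hCH)
    induction (mem_wComponent.mp hx).2 with
    | refl => exact hs
    | @tail b c hsb hbc ih =>
      by_contra hcC
      have hbC := ih (mem_wComponent.mpr ⟨hbc.1, hsb⟩)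
      have hcN : c ∈ wNbhd E C := mem_filter.mpr ⟨mem_univ _, hcC, b, hbC, hbc.2.2.symm⟩
      exact hcC (hHC ▸ mem_inter.mpr ⟨hbc.2.1, mem_union_right _ hcN⟩)

end WeakComponent

lemma wConn_image_of_walk {N k : ℕ} {E : Fin N → Fin N → Prop} {w : Fin (k + 1) → Fin N}
    (hw : ∀ m : Fin k, E (w m.castSucc) (w m.succ)) : WConn E (univ.image w) := by
  have hreach (m : Fin (k + 1)) : Relation.ReflTransGen (WAdjIn E (univ.image w)) (w 0) (w m) := by
    induction m using Fin.induction with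
    | zero => rfl
    | succ m ih =>
      exact ih.tail ⟨mem_image_of_mem _ (mem_univ _), mem_image_of_mem _ (mem_univ _),
        Or.inl (hw m)⟩
  intro x hx y hy
  obtain ⟨a, -, rfl⟩ := mem_image.mp hx
  obtain ⟨b, -, rfl⟩ := mem_image.mp hy
  exact (symm (hreach a)).trans (hreach b)

theorem sum_pow_card_mul_pow_card_wNbhd {R : Type*} [CommSemiring R] {p q : R} (hpq : p + q = 1)
    {N : ℕ} (E : Fin N → Fin N → Prop) {S : Finset (Fin N)} (hS : S.Nonempty)
    (hSconn : WConn E S) :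
    ∑ C : Finset (Fin N) with (C.Nonempty ∧ WConn E C) ∧ S ⊆ C, p ^ #C * q ^ #(wNbhd E C)
      = p ^ #S := by
  obtain ⟨s, hs⟩ := hS
  have hfiber {C : Finset (Fin N)} (hC : WConn E C) (hSC : S ⊆ C) (H : Finset (Fin N)) :
      H ∩ (C ∪ wNbhd E C) = C ↔ H ∩ S = S ∧ wComponent E H s = C := by
    rw [wComponent_eq_iff hC (hSC hs)]
    refine ⟨fun h => ⟨inter_eq_right.mpr (hSC.trans ?_), h⟩, And.right⟩
    exact h ▸ inter_subset_left
  have hmaps {H : Finset (Fin N)} (hH : H ∈ ({H | H ∩ S = S} : Finset (Finset (Fin N)))) :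
      wComponent E H s ∈
        ({C | (C.Nonempty ∧ WConn E C) ∧ S ⊆ C} : Finset (Finset (Fin N))) := by
    have hSH : S ⊆ H := inter_eq_right.mp (mem_filter.mp hH).2
    have hScomp := subset_wComponent (H := H) hSconn hs hSH
    exact mem_filter.mpr ⟨mem_univ _, ⟨⟨s, hScomp hs⟩, wConn_wComponent⟩, hScomp⟩
  calc ∑ C : Finset (Fin N) with (C.Nonempty ∧ WConn E C) ∧ S ⊆ C, p ^ #C * q ^ #(wNbhd E C)
      = ∑ C : Finset (Fin N) with (C.Nonempty ∧ WConn E C) ∧ S ⊆ C,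
          ∑ H : Finset (Fin N) with H ∩ (C ∪ wNbhd E C) = C, p ^ #H * q ^ #Hᶜ := by
        refine sum_congr rfl fun C _ => ?_
        rw [sum_pow_card_mul_pow_card_compl_of_inter_eq hpq subset_union_left,
          union_sdiff_cancel_left disjoint_wNbhd]
    -- group the sets `H ⊇ S` by the weak component of `s` in `H`
    _ = ∑ C : Finset (Fin N) with (C.Nonempty ∧ WConn E C) ∧ S ⊆ C,
          ∑ H ∈ ({H | H ∩ S = S} : Finset (Finset (Fin N))) with wComponent E H s = C,
            p ^ #H * q ^ #Hᶜ := by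
        refine sum_congr rfl fun C hC => ?_
        obtain ⟨⟨-, hCconn⟩, hSC⟩ := (mem_filter.mp hC).2
        rw [filter_filter]
        exact sum_congr (filter_congr fun H _ => hfiber hCconn hSC H) fun _ _ => rfl
    _ = ∑ H : Finset (Fin N) with H ∩ S = S, p ^ #H * q ^ #Hᶜ :=
        sum_fiberwise_of_maps_to (fun H hH => hmaps hH) _
    _ = p ^ #S := by
        rw [sum_pow_card_mul_pow_card_compl_of_inter_eq hpq subset_rfl, Finset.sdiff_self,
          card_empty, pow_zero, mul_one]

lemma Ibinom_natCast (a b : ℕ) : Ibinom a b = a.choose b := by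
  rcases le_or_gt b a with h | h
  · simp [Ibinom, h]
  · simp [Ibinom, h.not_ge, Nat.choose_eq_zero_of_lt h]

lemma Ibinom_of_neg {a b : ℤ} (h : b < 0) : Ibinom a b = 0 := by
  simp [Ibinom, h.not_ge]

lemma Polynomial.coeff_one_sub_X_pow {R : Type*} [CommRing R] (n r : ℕ) :
    ((1 - X : R[X]) ^ n).coeff r = (-1) ^ r * n.choose r := by
  have h1X : (1 - X : R[X]) = C (-1) * (X + C (-1)) := by simp; ring
  rw [h1X, mul_pow, ← C_pow, coeff_C_mul, coeff_X_add_C_pow]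
  rcases le_or_gt r n with h | h
  · obtain ⟨d, rfl⟩ := Nat.exists_eq_add_of_le h
    rw [Nat.add_sub_cancel_left, pow_add]
    ring_nf
    simp
  · simp [Nat.choose_eq_zero_of_lt h]

lemma coeff_X_pow_mul_one_sub_X_pow (c n k : ℕ) :
    ((X : ℤ[X]) ^ c * (1 - X) ^ n).coeff k = Ibinom n (k - c) * (-1) ^ ((k : ℤ) - c).toNat := by
  rw [coeff_X_pow_mul']
  split_ifs with hck
  · obtain ⟨r, rfl⟩ := Nat.exists_eq_add_of_le hck
    rw [Nat.add_sub_cancel_left, coeff_one_sub_X_pow, Nat.cast_add, add_sub_cancel_left,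
      Ibinom_natCast, Int.toNat_natCast, mul_comm]
  · rw [Ibinom_of_neg (by omega), zero_mul]

theorem sum_Ibinom_wNbhd_mul_neg_one_pow {N : ℕ} (E : Fin N → Fin N → Prop) (k : ℕ)
    {S : Finset (Fin N)} (hS : S.Nonempty) (hSconn : WConn E S) :
    ∑ C : Finset (Fin N) with (C.Nonempty ∧ WConn E C) ∧ S ⊆ C,
        Ibinom #(wNbhd E C) (k - #C) * (-1) ^ ((k : ℤ) - #C).toNat
      = if #S = k then 1 else 0 := by
  simp_rw [← coeff_X_pow_mul_one_sub_X_pow, ← finsetSum_coeff,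
    sum_pow_card_mul_pow_card_wNbhd (add_sub_cancel (X : ℤ[X]) 1) E hS hSconn, coeff_X_pow,
    eq_comm]

end

noncomputable def closedWalks {α : Type*} [Fintype α] [DecidableEq α] (r : α → α → Prop)
    (k : ℕ) (i : α) : Finset (Fin (k + 1) → α) :=
  Finset.univ.filter fun w => w 0 = i ∧ w (Fin.last k) = i ∧
    ∀ m : Fin k, r (w m.castSucc) (w m.succ)

lemma mem_closedWalks {α : Type*} [Fintype α] [DecidableEq α] {r : α → α → Prop} {k : ℕ}
    {i : α} {w : Fin (k + 1) → α} :
    w ∈ closedWalks r k i ↔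
      w 0 = i ∧ w (Fin.last k) = i ∧ ∀ m : Fin k, r (w m.castSucc) (w m.succ) := by
  simp [closedWalks]

lemma natCard_cycles_eq_card_filter_closedWalks {α : Type*} [Fintype α] [DecidableEq α]
    (r : α → α → Prop) {k : ℕ} (hk : 1 ≤ k) (i : α) :
    Nat.card {w : Fin (k + 1) → α //
        w 0 = i ∧ w (Fin.last k) = i ∧ (∀ m : Fin k, r (w m.castSucc) (w m.succ)) ∧
        ∀ a b : Fin k, w a.castSucc = w b.castSucc → a = b}
      = ((closedWalks r k i).filter fun w => (Finset.univ.image w).card = k).card := by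
  rw [Nat.card_eq_fintype_card, Fintype.card_subtype, closedWalks, Finset.filter_filter]
  refine congrArg Finset.card (Finset.filter_congr fun w _ => ?_)
  refine ⟨fun ⟨h0, hl, hw, hinj⟩ => ⟨⟨h0, hl, hw⟩, ?_⟩,
    fun ⟨⟨h0, hl, hw⟩, hcard⟩ => ⟨h0, hl, hw, ?_⟩⟩
  · exact (injective_castSucc_iff_card_image hk (hl.trans h0.symm)).mp hinj
  · exact (injective_castSucc_iff_card_image hk (hl.trans h0.symm)).mpr hcard

lemma restrict_pow_apply_self {N : ℕ} {E : Fin N → Fin N → Prop}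
    {A : Matrix (Fin N) (Fin N) ℤ} (hA : ∀ i j, A i j = if E i j then 1 else 0)
    {k : ℕ} (hk : 1 ≤ k) (i : Fin N) (C : Finset (Fin N)) :
    (restrict A C ^ k) i i
      = ((closedWalks E k i).filter fun w => Finset.univ.image w ⊆ C).card := by
  rw [Matrix.pow_apply_eq_card_of_eq_ite (r := fun a b => (a ∈ C ∧ b ∈ C) ∧ E a b)
    (fun a b => by rw [restrict, hA]; split_ifs <;> tauto), closedWalks, Finset.filter_filter]
  norm_cast
  congr 1
  ext w
  simp only [Finset.mem_filter, Finset.mem_univ, true_and, forall_and,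
    Finset.image_subset_iff, true_implies]
  rw [← Fin.forall_castSucc_and_forall_succ_iff hk]
  tauto

theorem stmt10 (N : ℕ) (E : Fin N → Fin N → Prop)
    (A : Matrix (Fin N) (Fin N) ℤ) (hA : ∀ i j, A i j = if E i j then 1 else 0)
    (k : ℕ) (hk : 1 ≤ k) (i : Fin N) :
    (Nat.card {w : Fin (k + 1) → Fin N //
        w 0 = i ∧ w (Fin.last k) = i ∧ (∀ m : Fin k, E (w m.castSucc) (w m.succ)) ∧
        ∀ a b : Fin k, w a.castSucc = w b.castSucc → a = b} : ℤ)
      = ∑ C ∈ Finset.univ.powerset.filter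
            (fun C : Finset (Fin N) => C.Nonempty ∧ WConn E C),
          Ibinom ((wNbhd E C).card : ℤ) ((k : ℤ) - C.card) *
            (-1) ^ ((k : ℤ) - C.card).toNat * (restrict A C ^ k) i i := by
  rw [natCard_cycles_eq_card_filter_closedWalks E hk]
  simp only [restrict_pow_apply_self hA hk, Finset.natCast_card_filter, Finset.mul_sum, mul_ite,
    mul_one, mul_zero]
  rw [Finset.sum_comm]
  refine Finset.sum_congr rfl fun w hw => ?_
  obtain ⟨-, -, hwalk⟩ := mem_closedWalks.mp hw
  rw [← sum_Ibinom_wNbhd_mul_neg_one_pow E k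
    ⟨w 0, Finset.mem_image_of_mem w (Finset.mem_univ 0)⟩ (wConn_image_of_walk hwalk),
    Finset.powerset_univ, ← Finset.filter_filter, Finset.sum_filter]
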